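/- arXiv:1104.0969 — 4 statements merged into one kernel-verified Lean document; each statement's English description precedes it below -/
import Mathlib

section
/- Let Γ ∈ ℂ with Im Γ > 0 satisfy K·Γ² + ζ·Γ + 1 = 0 where K > 1 is a real number and ζ ∈ ℂ with Im ζ > 0. Then Γ is the unique solution in the upper half-plane of this quadratic equation. -/
/-- The Green function of the adjacency operator on the rooted `K`-regular tree is
the unique solution in the upper half-plane of `K Γ² + ζ Γ + 1 = 0`. -/
theorem quadratic_green_unique (K : ℝ) (hK : 1 < K) (ζ Γ : ℂ)
    (hζ : 0 < ζ.im) (hΓ : 0 < Γ.im)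
    (hroot : (K : ℂ) * Γ ^ 2 + ζ * Γ + 1 = 0) :
    ∀ Γ' : ℂ, 0 < Γ'.im → (K : ℂ) * Γ' ^ 2 + ζ * Γ' + 1 = 0 → Γ' = Γ := by
  intro Γ' hΓ' hroot'
  by_contra hne
  have h : ((K : ℂ) * (Γ' + Γ) + ζ) * (Γ' - Γ) = 0 := by
    linear_combination hroot' - hroot
  have h2 : (K : ℂ) * (Γ' + Γ) + ζ = 0 := by
    rcases mul_eq_zero.mp h with h | h
    · exact h
    · exact absurd (sub_eq_zero.mp h) hne
  have him := congrArg Complex.im h2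
  simp [Complex.add_im, Complex.mul_im, Complex.ofReal_im, Complex.ofReal_re] at him
  nlinarith [him, hζ, hΓ, hΓ', hK]
end

section
/- Let u, v, α, β ∈ ℂ with v, u ≠ 0 and t > 0. Suppose |u − αβ/v| ≤ 1/t and |v − αβ/u| ≤ 1/t. Then min{|u|, |v|} ≤ √(|α||β|) + 1/t. -/
lemma aux_quad_bound (c s t a : ℝ) (hss : s * s = c) (hs : 0 ≤ s)
    (ht : 0 < t) (ha : 0 < a) (h : a ≤ c / a + 1 / t) : a ≤ s + 1 / t := by
  have ht2 : 0 < 1 / t := by positivity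
  by_contra h'
  push_neg at h'
  have key : (a - 1 / t) * a ≤ c := by
    rw [← le_div_iff₀ ha]; linarith
  have : s * s < (a - 1 / t) * a :=
    mul_lt_mul'' (by linarith) (by linarith) hs hs
  linarith

/-- Key deterministic lemma for the two-site weak-L¹ bound: if
`|u − αβ/v| ≤ 1/t` and `|v − αβ/u| ≤ 1/t`, then
`min{|u|,|v|} ≤ √(|α||β|) + 1/t`. -/
theorem min_modulus_bound (u v α β : ℂ) (hu : u ≠ 0) (hv : v ≠ 0)
    (t : ℝ) (ht : 0 < t)
    (h1 : ‖u - α * β / v‖ ≤ 1 / t)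
    (h2 : ‖v - α * β / u‖ ≤ 1 / t) :
    min ‖u‖ ‖v‖ ≤
      Real.sqrt (‖α‖ * ‖β‖) + 1 / t := by
  set c : ℝ := ‖α‖ * ‖β‖ with hc
  have hc0 : 0 ≤ c := by positivity
  set s : ℝ := Real.sqrt c with hs
  have hs0 : 0 ≤ s := Real.sqrt_nonneg c
  have hss : s * s = c := Real.mul_self_sqrt hc0
  have hu' : 0 < ‖u‖ := norm_pos_iff.mpr hu
  have hv' : 0 < ‖v‖ := norm_pos_iff.mpr hv
  have e1 : ‖u‖ ≤ c / ‖v‖ + 1 / t := by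
    have h := (norm_sub_norm_le u (α * β / v)).trans h1
    have habs : ‖α * β / v‖ = c / ‖v‖ := by
      simp [map_div₀, map_mul, hc]
    rw [habs] at h; linarith
  have e2 : ‖v‖ ≤ c / ‖u‖ + 1 / t := by
    have h := (norm_sub_norm_le v (α * β / u)).trans h2
    have habs : ‖α * β / u‖ = c / ‖u‖ := by
      simp [map_div₀, map_mul, hc]
    rw [habs] at h; linarith
  rcases le_total (‖u‖) (‖v‖) with hle | hle
  · rw [min_eq_left hle]
    have hdiv : c / ‖v‖ ≤ c / ‖u‖ :=
      div_le_div_of_nonneg_left hc0 hu' hle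
    exact aux_quad_bound c s t _ hss hs0 ht hu' (by linarith)
  · rw [min_eq_right hle]
    have hdiv : c / ‖u‖ ≤ c / ‖v‖ :=
      div_le_div_of_nonneg_left hc0 hv' hle
    exact aux_quad_bound c s t _ hss hs0 ht hv' (by linarith)
end

section
/- Let ρ : ℝ → [0,∞) be a bounded probability density that is single-humped: there exists m ∈ ℝ such that ρ is monotone increasing on (−∞, m] and monotone decreasing on [m, ∞), and ρ(m−ν₀), ρ(m+ν₀) > 0 for some ν₀ > 0. Then there exists a finite constant c such that for Lebesgue-almost all v ∈ ℝ, ρ(v) ≤ c · M(v), where M(v) := inf_{ν ∈ (0,1]} (2ν)⁻¹ ∫ 1_{|x−v| ≤ ν} ρ(x) dx is the minimal function of ρ. -/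
open MeasureTheory

/-- Any bounded single-hump probability density is bounded relative to its
minimal function `M(v) = inf_{ν ∈ (0,1]} (2ν)⁻¹ ∫_{|x−v|≤ν} ρ(x) dx`. -/
theorem single_hump_regularity (ρ : ℝ → ℝ) (hρnn : ∀ v, 0 ≤ ρ v)
    (hρmeas : Measurable ρ)
    (hbd : ∃ C : ℝ, ∀ v, ρ v ≤ C)
    (hprob : ∫ v, ρ v = 1)
    (m : ℝ) (hmono : MonotoneOn ρ (Set.Iic m)) (hanti : AntitoneOn ρ (Set.Ici m))
    (ν₀ : ℝ) (hν₀ : 0 < ν₀) (hl : 0 < ρ (m - ν₀)) (hr : 0 < ρ (m + ν₀)) :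
    ∃ c : ℝ, ∀ᵐ v ∂(volume : Measure ℝ),
      ρ v ≤ c * ⨅ ν : Set.Ioc (0 : ℝ) 1,
        (2 * (ν : ℝ))⁻¹ * ∫ x in Set.Icc (v - (ν : ℝ)) (v + (ν : ℝ)), ρ x := by
  obtain ⟨C, hC⟩ := hbd
  have hCpos : 0 < C := lt_of_lt_of_le hl (hC _)
  set a : ℝ := min (ρ (m - ν₀)) (ρ (m + ν₀)) with ha_def
  have ha : 0 < a := lt_min hl hr
  set β : ℝ := min 1 ν₀ / 2 with hβ_def
  have hβ : 0 < β := by positivity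
  -- integrability of ρ on any Icc
  have hint : ∀ s t : ℝ, IntegrableOn ρ (Set.Icc s t) volume := by
    intro s t
    refine Measure.integrableOn_of_bounded (M := C) (by simp) hρmeas.aestronglyMeasurable ?_
    filter_upwards with x
    rw [Real.norm_eq_abs, abs_of_nonneg (hρnn x)]
    exact hC x
  -- key pointwise lower bound on ρ over a short interval toward the mode
  have key : ∀ v : ℝ, ∀ ν' : ℝ, 0 < ν' → ν' ≤ ν₀ →
      ν' * min (ρ v) a ≤ ∫ x in Set.Icc (v - ν') (v + ν'), ρ x := by
    intro v ν' hν' hν'le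
    rcases le_total v m with hvm | hvm
    · -- work on [v, v+ν']
      have hsub : Set.Icc v (v + ν') ⊆ Set.Icc (v - ν') (v + ν') :=
        Set.Icc_subset_Icc (by linarith) le_rfl
      have h1 : ∫ x in Set.Icc v (v + ν'), ρ x ≤ ∫ x in Set.Icc (v - ν') (v + ν'), ρ x :=
        setIntegral_mono_set (hint _ _) (Filter.Eventually.of_forall fun x => hρnn x)
          (HasSubset.Subset.eventuallyLE hsub)
      refine le_trans ?_ h1
      have h2 : ∀ x ∈ Set.Icc v (v + ν'), min (ρ v) a ≤ ρ x := by
        intro x hx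
        rcases le_total x m with hxm | hxm
        · exact le_trans (min_le_left _ _) (hmono hvm hxm hx.1)
        · refine le_trans (min_le_right _ _) (le_trans (min_le_right _ _) ?_)
          exact hanti hxm (by simp only [Set.mem_Ici]; linarith) (by linarith [hx.2])
      calc ν' * min (ρ v) a = ∫ _ in Set.Icc v (v + ν'), min (ρ v) a := by
            rw [setIntegral_const, measureReal_def, Real.volume_Icc, smul_eq_mul]
            rw [ENNReal.toReal_ofReal (by linarith)]; ring
        _ ≤ ∫ x in Set.Icc v (v + ν'), ρ x :=
            setIntegral_mono_on (integrableOn_const (by simp) (by simp))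
              (hint _ _) measurableSet_Icc h2
    · -- work on [v-ν', v]
      have hsub : Set.Icc (v - ν') v ⊆ Set.Icc (v - ν') (v + ν') :=
        Set.Icc_subset_Icc le_rfl (by linarith)
      have h1 : ∫ x in Set.Icc (v - ν') v, ρ x ≤ ∫ x in Set.Icc (v - ν') (v + ν'), ρ x :=
        setIntegral_mono_set (hint _ _) (Filter.Eventually.of_forall fun x => hρnn x)
          (HasSubset.Subset.eventuallyLE hsub)
      refine le_trans ?_ h1
      have h2 : ∀ x ∈ Set.Icc (v - ν') v, min (ρ v) a ≤ ρ x := by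
        intro x hx
        rcases le_total x m with hxm | hxm
        · refine le_trans (min_le_right _ _) (le_trans (min_le_left _ _) ?_)
          exact hmono (by simp only [Set.mem_Iic]; linarith) hxm (by linarith [hx.1])
        · exact le_trans (min_le_left _ _) (hanti hxm (Set.mem_Ici.2 hvm) hx.2)
      calc ν' * min (ρ v) a = ∫ _ in Set.Icc (v - ν') v, min (ρ v) a := by
            rw [setIntegral_const, measureReal_def, Real.volume_Icc, smul_eq_mul]
            rw [ENNReal.toReal_ofReal (by linarith)]; ring
        _ ≤ ∫ x in Set.Icc (v - ν') v, ρ x :=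
            setIntegral_mono_on (integrableOn_const (by simp) (by simp))
              (hint _ _) measurableSet_Icc h2
  -- lower bound on each averaged integral
  have avg : ∀ v : ℝ, ∀ ν : Set.Ioc (0 : ℝ) 1,
      β * min (ρ v) a ≤ (2 * (ν : ℝ))⁻¹ * ∫ x in Set.Icc (v - (ν : ℝ)) (v + (ν : ℝ)), ρ x := by
    intro v ⟨ν, hν0, hν1⟩
    simp only
    set ν' : ℝ := min ν ν₀ with hν'def
    have hν'pos : 0 < ν' := lt_min hν0 hν₀
    have hminnn : 0 ≤ min (ρ v) a := le_min (hρnn v) ha.le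
    have hmono_int : ∫ x in Set.Icc (v - ν') (v + ν'), ρ x
        ≤ ∫ x in Set.Icc (v - ν) (v + ν), ρ x := by
      have hle : ν' ≤ ν := min_le_left _ _
      refine setIntegral_mono_set (hint _ _) (Filter.Eventually.of_forall fun x => hρnn x)
        (HasSubset.Subset.eventuallyLE (Set.Icc_subset_Icc (by linarith) (by linarith)))
    have h1 : ν' * min (ρ v) a ≤ ∫ x in Set.Icc (v - ν) (v + ν), ρ x :=
      le_trans (key v ν' hν'pos (min_le_right _ _)) hmono_int
    have h2 : β * min (ρ v) a ≤ (2 * ν)⁻¹ * (ν' * min (ρ v) a) := by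
      rw [← mul_assoc]
      refine mul_le_mul_of_nonneg_right ?_ hminnn
      rw [hβ_def, div_le_iff₀ (by norm_num : (0:ℝ) < 2), inv_mul_eq_div, div_mul_eq_mul_div,
        le_div_iff₀ (by linarith : (0:ℝ) < 2 * ν)]
      rcases le_total ν ν₀ with h | h
      · have : ν' = ν := min_eq_left h
        rw [this]; nlinarith [min_le_left (1:ℝ) ν₀]
      · have : ν' = ν₀ := min_eq_right h
        rw [this]; nlinarith [min_le_right (1:ℝ) ν₀]
    refine le_trans h2 ?_
    exact mul_le_mul_of_nonneg_left h1 (by positivity)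
  refine ⟨max β⁻¹ (C / (β * a)), Filter.Eventually.of_forall fun v => ?_⟩
  set M : ℝ := ⨅ ν : Set.Ioc (0 : ℝ) 1,
      (2 * (ν : ℝ))⁻¹ * ∫ x in Set.Icc (v - (ν : ℝ)) (v + (ν : ℝ)), ρ x with hM
  have hMge : β * min (ρ v) a ≤ M := le_ciInf (avg v)
  have hc0 : (0:ℝ) ≤ max β⁻¹ (C / (β * a)) := le_trans (inv_nonneg.2 hβ.le) (le_max_left _ _)
  have hstep : max β⁻¹ (C / (β * a)) * (β * min (ρ v) a)
      ≤ max β⁻¹ (C / (β * a)) * M := mul_le_mul_of_nonneg_left hMge hc0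
  refine le_trans ?_ hstep
  rcases le_total (ρ v) a with h | h
  · rw [min_eq_left h]
    calc ρ v = β⁻¹ * (β * ρ v) := by
          rw [← mul_assoc, inv_mul_cancel₀ hβ.ne', one_mul]
      _ ≤ max β⁻¹ (C / (β * a)) * (β * ρ v) :=
          mul_le_mul_of_nonneg_right (le_max_left _ _) (mul_nonneg hβ.le (hρnn v))
  · rw [min_eq_right h]
    calc ρ v ≤ C := hC v
      _ = C / (β * a) * (β * a) := (div_mul_cancel₀ C (mul_pos hβ ha).ne').symm
      _ ≤ max β⁻¹ (C / (β * a)) * (β * a) :=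
          mul_le_mul_of_nonneg_right (le_max_right _ _) (mul_nonneg hβ.le ha.le)
end

section
/- Let V be a random variable with bounded density ρ on ℝ and let 0 < α ≤ (8‖ρ‖_∞ K²)⁻¹ for some K > 1. Let V₁,…,V_R be i.i.d. copies of V with values in [−1,1]. Then for each fixed sequence, P(Σ_{j=1}^R (Vⱼ + 1) < αR) ≤ (2√(2‖ρ‖_∞ α))^R, and consequently for K^R independent such rays, P(min over K^R rays of Σ_{j=1}^R (Vⱼ+1) < αR) ≤ K^R (2√(2‖ρ‖_∞ α))^R. -/
open MeasureTheory

/-- Probability bound for small potential sums along rays: for i.i.d. variables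
with bounded density `ρ` supported in `[−1,1]` and
`0 < α ≤ (8‖ρ‖_∞ K²)⁻¹`, the probability that the sum `Σ (Vⱼ+1)` along a ray of
length `R` is below `αR` is at most `(2√(2‖ρ‖_∞ α))^R`; consequently a union
bound over `K^R` independent rays gives the factor `K^R`. -/
theorem ray_minimum_bound (ρ : ℝ → ℝ) (hρnn : ∀ v, 0 ≤ ρ v)
    (hρmeas : Measurable ρ)
    (hsupp : ∀ v, v ∉ Set.Icc (-1 : ℝ) 1 → ρ v = 0)
    (hprob : IsProbabilityMeasure (volume.withDensity fun v => ENNReal.ofReal (ρ v)))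
    (M : ℝ) (hMpos : 0 < M) (hM : ∀ᵐ v ∂(volume : Measure ℝ), ρ v ≤ M)
    (K : ℕ) (hK : 1 < K) (α : ℝ) (hα : 0 < α)
    (hαle : α ≤ (8 * M * (K : ℝ) ^ 2)⁻¹) (R : ℕ) (hR : 0 < R) :
    (Measure.pi fun _ : Fin R => volume.withDensity fun v => ENNReal.ofReal (ρ v))
        {f | ∑ j, (f j + 1) < α * R} ≤
      ENNReal.ofReal ((2 * Real.sqrt (2 * M * α)) ^ R) ∧
    (Measure.pi fun _ : Fin (K ^ R) =>
        Measure.pi fun _ : Fin R => volume.withDensity fun v => ENNReal.ofReal (ρ v))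
        {g | ∃ i, ∑ j, (g i j + 1) < α * R} ≤
      ENNReal.ofReal ((K : ℝ) ^ R * (2 * Real.sqrt (2 * M * α)) ^ R) := by
  haveI := hprob
  set μ : Measure ℝ := volume.withDensity fun v => ENNReal.ofReal (ρ v) with hμdef
  set ε : ℝ := 2 * M * α with hεdef
  have hεpos : 0 < ε := by positivity
  have hK1 : (1:ℝ) ≤ (K:ℝ) := by exact_mod_cast hK.le
  have hεle : ε ≤ 1 := by
    have h1 : 2 * M * α ≤ 2 * M * (8 * M * (K:ℝ)^2)⁻¹ :=
      mul_le_mul_of_nonneg_left hαle (by positivity)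
    have h2 : 2 * M * (8 * M * (K:ℝ)^2)⁻¹ = (4 * (K:ℝ)^2)⁻¹ := by
      field_simp; ring
    have h3 : (4 * (K:ℝ)^2)⁻¹ ≤ 1 := by
      rw [inv_le_one_iff₀]; right; nlinarith
    calc ε = 2 * M * α := rfl
      _ ≤ (4 * (K:ℝ)^2)⁻¹ := h2 ▸ h1
      _ ≤ 1 := h3
  -- single-variable bound
  have hq : μ (Set.Iio (2*α - 1)) ≤ ENNReal.ofReal ε := by
    rw [hμdef, withDensity_apply _ measurableSet_Iio]
    calc ∫⁻ v in Set.Iio (2*α-1), ENNReal.ofReal (ρ v)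
        ≤ ∫⁻ v in Set.Iio (2*α-1),
            (Set.Icc (-1:ℝ) 1).indicator (fun _ => ENNReal.ofReal M) v := by
          apply lintegral_mono_ae
          filter_upwards [ae_restrict_of_ae hM] with v hv
          by_cases hvI : v ∈ Set.Icc (-1:ℝ) 1
          · simp only [Set.indicator_of_mem hvI]
            exact ENNReal.ofReal_le_ofReal hv
          · simp [Set.indicator_of_notMem hvI, hsupp v hvI]
      _ = ENNReal.ofReal M * volume (Set.Icc (-1:ℝ) 1 ∩ Set.Iio (2*α-1)) := by
          rw [lintegral_indicator measurableSet_Icc, setLIntegral_const,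
            Measure.restrict_apply measurableSet_Icc]
      _ ≤ ENNReal.ofReal M * volume (Set.Ico (-1:ℝ) (2*α-1)) := by
          apply mul_le_mul_right
          apply measure_mono
          rintro v ⟨⟨h1, _⟩, h2⟩
          exact ⟨h1, h2⟩
      _ ≤ ENNReal.ofReal ε := by
          rw [Real.volume_Ico, ← ENNReal.ofReal_mul hMpos.le]
          apply ENNReal.ofReal_le_ofReal
          rw [hεdef]; nlinarith
  -- null set
  have hneg : μ (Set.Iio (-1:ℝ)) = 0 := by
    rw [hμdef, withDensity_apply _ measurableSet_Iio]
    have hcong : ∫⁻ v in Set.Iio (-1:ℝ), ENNReal.ofReal (ρ v)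
        = ∫⁻ _v in Set.Iio (-1:ℝ), (0:ENNReal) :=
      setLIntegral_congr_fun_ae measurableSet_Iio
        (ae_of_all _ (fun v (hv : v < -1) => by
          have : v ∉ Set.Icc (-1:ℝ) 1 := by
            simp only [Set.mem_Icc, not_and_or, not_le]; left; linarith
          simp [hsupp v this]))
    rw [hcong]
    simp
  set s₀ : ℕ := R / 2 + 1 with hs₀
  set ν : Measure (Fin R → ℝ) := Measure.pi fun _ : Fin R => μ with hνdef
  set E : Set (Fin R → ℝ) := {f | ∑ j, (f j + 1) < α * R} with hEdef
  have hEmeas : MeasurableSet E := by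
    apply measurableSet_lt _ measurable_const
    exact Finset.measurable_sum _ fun j _ => (measurable_pi_apply j).add measurable_const
  -- product measure of rectangle sets
  have hrect : ∀ S : Finset (Fin R),
      ν {f | ∀ j ∈ S, f j ∈ Set.Iio (2*α-1)} = μ (Set.Iio (2*α-1)) ^ S.card := by
    intro S
    have hset : {f : Fin R → ℝ | ∀ j ∈ S, f j ∈ Set.Iio (2*α-1)}
        = Set.pi Set.univ (fun j => if j ∈ S then Set.Iio (2*α-1) else Set.univ) := by
      ext f
      simp only [Set.mem_pi, Set.mem_univ, true_implies, Set.mem_setOf_eq]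
      constructor
      · intro h j
        by_cases hj : j ∈ S <;> simp [hj, h]
      · intro h j hj
        have := h j; simpa [hj] using this
    rw [hset, hνdef, Measure.pi_pi]
    have : ∀ j : Fin R, μ (if j ∈ S then Set.Iio (2*α-1) else Set.univ)
        = if j ∈ S then μ (Set.Iio (2*α-1)) else 1 := by
      intro j; by_cases hj : j ∈ S <;> simp [hj]
    simp_rw [this]
    rw [Finset.prod_ite_mem, Finset.univ_inter, Finset.prod_const]
  -- the first bound
  have key : ν E ≤ ENNReal.ofReal ((2 * Real.sqrt ε) ^ R) := by
    have hGnull : ν {f | ¬ ∀ j, 0 ≤ f j + 1} = 0 := by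
      refine measure_mono_null ?_
        (measure_iUnion_null (s := fun j : Fin R => Function.eval j ⁻¹' Set.Iio (-1:ℝ))
          fun j => Measure.pi_eval_preimage_null _ hneg)
      intro f hf
      simp only [Set.mem_setOf_eq, not_forall, not_le] at hf
      obtain ⟨j, hj⟩ := hf
      exact Set.mem_iUnion.mpr ⟨j, by simpa [Set.mem_Iio] using (by linarith : f j < -1)⟩
    have hsplit : ν E ≤ ν (E ∩ {f | ∀ j, 0 ≤ f j + 1}) := by
      calc ν E ≤ ν ((E ∩ {f | ∀ j, 0 ≤ f j + 1}) ∪ {f | ¬ ∀ j, 0 ≤ f j + 1}) := by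
            apply measure_mono
            intro f hf
            by_cases h : ∀ j, 0 ≤ f j + 1
            · exact Or.inl ⟨hf, h⟩
            · exact Or.inr h
        _ ≤ ν (E ∩ {f | ∀ j, 0 ≤ f j + 1}) + ν {f | ¬ ∀ j, 0 ≤ f j + 1} :=
            measure_union_le _ _
        _ = ν (E ∩ {f | ∀ j, 0 ≤ f j + 1}) := by rw [hGnull, add_zero]
    have hsub : E ∩ {f | ∀ j, 0 ≤ f j + 1} ⊆
        ⋃ S ∈ Finset.powersetCard s₀ (Finset.univ : Finset (Fin R)),
          {f | ∀ j ∈ S, f j ∈ Set.Iio (2*α-1)} := by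
      rintro f ⟨hfE, hfG⟩
      set T : Finset (Fin R) := Finset.univ.filter (fun j => f j + 1 < 2*α) with hT
      have hTcard : s₀ ≤ T.card := by
        have hcompl : ∀ j ∈ Tᶜ, 2*α ≤ f j + 1 := by
          intro j hj
          have : j ∉ T := Finset.mem_compl.mp hj
          rw [hT, Finset.mem_filter] at this
          push_neg at this
          exact this (Finset.mem_univ j)
        have h1 : (Tᶜ.card : ℝ) * (2*α) ≤ ∑ j ∈ Tᶜ, (f j + 1) := by
          calc (Tᶜ.card : ℝ) * (2*α) = ∑ _j ∈ Tᶜ, (2*α) := by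
                rw [Finset.sum_const, nsmul_eq_mul]
            _ ≤ ∑ j ∈ Tᶜ, (f j + 1) := Finset.sum_le_sum hcompl
        have h2 : ∑ j ∈ Tᶜ, (f j + 1) ≤ ∑ j, (f j + 1) :=
          Finset.sum_le_sum_of_subset_of_nonneg (Finset.subset_univ _)
            (fun j _ _ => hfG j)
        have h3 : (Tᶜ.card : ℝ) * (2*α) < α * R := lt_of_le_of_lt (h1.trans h2) hfE
        have h4 : 2 * (Tᶜ.card : ℝ) < R := by nlinarith
        have h5 : 2 * Tᶜ.card < R := by exact_mod_cast h4
        have h6 : Tᶜ.card = R - T.card := by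
          rw [Finset.card_compl, Fintype.card_fin]
        have h7 : T.card ≤ R :=
          le_of_le_of_eq (Finset.card_le_univ T) (Fintype.card_fin R)
        omega
      obtain ⟨S, hST, hScard⟩ := Finset.exists_subset_card_eq hTcard
      apply Set.mem_biUnion (Finset.mem_powersetCard.mpr ⟨Finset.subset_univ _, hScard⟩)
      intro j hj
      have := (Finset.mem_filter.mp (hST hj)).2
      simp only [Set.mem_Iio]; linarith
    have hchoose : R.choose s₀ ≤ 2 ^ R := by
      by_cases h : s₀ ≤ R
      · calc R.choose s₀ ≤ ∑ i ∈ Finset.range (R+1), R.choose i :=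
            Finset.single_le_sum (fun i _ => Nat.zero_le _)
              (Finset.mem_range.mpr (by omega))
          _ = 2 ^ R := Nat.sum_range_choose R
      · rw [Nat.choose_eq_zero_of_lt (by omega)]; exact Nat.zero_le _
    have hsqrt1 : ENNReal.ofReal (Real.sqrt ε) ≤ 1 :=
      ENNReal.ofReal_le_one.mpr (Real.sqrt_le_one.mpr hεle)
    have hpow : μ (Set.Iio (2*α-1)) ^ s₀ ≤ (ENNReal.ofReal (Real.sqrt ε)) ^ R := by
      have hq2 : μ (Set.Iio (2*α-1)) ≤ (ENNReal.ofReal (Real.sqrt ε)) ^ 2 := by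
        rw [← ENNReal.ofReal_pow (Real.sqrt_nonneg _), Real.sq_sqrt hεpos.le]
        exact hq
      calc μ (Set.Iio (2*α-1)) ^ s₀ ≤ ((ENNReal.ofReal (Real.sqrt ε)) ^ 2) ^ s₀ :=
            pow_le_pow_left' hq2 _
        _ = (ENNReal.ofReal (Real.sqrt ε)) ^ (2 * s₀) := by rw [← pow_mul]
        _ = (ENNReal.ofReal (Real.sqrt ε)) ^ R
              * (ENNReal.ofReal (Real.sqrt ε)) ^ (2 * s₀ - R) := by
            rw [← pow_add]; congr 1; omega
        _ ≤ (ENNReal.ofReal (Real.sqrt ε)) ^ R * 1 :=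
            mul_le_mul_right (pow_le_one' hsqrt1 _) _
        _ = (ENNReal.ofReal (Real.sqrt ε)) ^ R := mul_one _
    calc ν E ≤ ν (E ∩ {f | ∀ j, 0 ≤ f j + 1}) := hsplit
      _ ≤ ∑ S ∈ Finset.powersetCard s₀ (Finset.univ : Finset (Fin R)),
            ν {f | ∀ j ∈ S, f j ∈ Set.Iio (2*α-1)} :=
          (measure_mono hsub).trans (measure_biUnion_finset_le _ _)
      _ = ∑ S ∈ Finset.powersetCard s₀ (Finset.univ : Finset (Fin R)),
            μ (Set.Iio (2*α-1)) ^ s₀ := by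
          apply Finset.sum_congr rfl
          intro S hS
          rw [hrect S, (Finset.mem_powersetCard.mp hS).2]
      _ = (R.choose s₀ : ℕ) * μ (Set.Iio (2*α-1)) ^ s₀ := by
          rw [Finset.sum_const, Finset.card_powersetCard, Finset.card_univ,
            Fintype.card_fin, nsmul_eq_mul]
      _ ≤ (2^R : ℕ) * (ENNReal.ofReal (Real.sqrt ε)) ^ R := by
          apply mul_le_mul' (by exact_mod_cast Nat.cast_le.mpr hchoose) hpow
      _ = ENNReal.ofReal ((2 * Real.sqrt ε) ^ R) := by
          rw [ENNReal.ofReal_pow (by positivity), ENNReal.ofReal_mul (by norm_num : (0:ℝ) ≤ 2),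
            mul_pow, ENNReal.ofReal_ofNat]
          push_cast
          ring
  refine ⟨key, ?_⟩
  -- union bound over K^R rays
  haveI : IsProbabilityMeasure μ := hprob
  haveI : ∀ i : Fin R, IsProbabilityMeasure μ := fun _ => hprob
  have hrays : {g : Fin (K^R) → Fin R → ℝ | ∃ i, ∑ j, (g i j + 1) < α * R}
      = ⋃ i : Fin (K^R), Function.eval i ⁻¹' E := by
    ext g; simp [hEdef, Function.eval]
  calc (Measure.pi fun _ : Fin (K ^ R) => ν)
        {g | ∃ i, ∑ j, (g i j + 1) < α * R}
      ≤ ∑' i : Fin (K^R), (Measure.pi fun _ : Fin (K ^ R) => ν) (Function.eval i ⁻¹' E) := by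
        rw [hrays]; exact measure_iUnion_le _
    _ = ∑' _i : Fin (K^R), ν E := by
        refine tsum_congr fun i => ?_
        rw [Set.eval_preimage, Measure.pi_pi]
        rw [Finset.prod_eq_single i
          (fun j _ hj => by rw [Function.update_of_ne hj]; exact measure_univ)
          (fun h => absurd (Finset.mem_univ i) h)]
        rw [Function.update_self]
    _ = (K^R : ℕ) * ν E := by
        rw [tsum_fintype, Finset.sum_const, Finset.card_univ, Fintype.card_fin,
          nsmul_eq_mul]
    _ ≤ (K^R : ℕ) * ENNReal.ofReal ((2 * Real.sqrt ε) ^ R) := mul_le_mul_right key _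
    _ = ENNReal.ofReal ((K:ℝ) ^ R * (2 * Real.sqrt ε) ^ R) := by
        rw [ENNReal.ofReal_mul (by positivity)]
        congr 1
        rw [ENNReal.ofReal_pow (by positivity), ENNReal.ofReal_natCast]
        push_cast
        ring
end
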